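/- arXiv:1604.06306 — 6 statements merged into one kernel-verified Lean document; each statement's English description precedes it below -/
import Mathlib

section
/- Let p be a prime and W a finite-dimensional vector space over 𝔽ₚ. The degree-p homogeneous component S^p(W) of the symmetric algebra S(W) is spanned (as an 𝔽ₚ-vector space) by the elements x^(p-1)·y, where x and y run over W. -/
/-!
Polarization: for `n` elements `ℓ i` of a commutative ring,
`∑ S, (-1)^|S| (∑_{i ∈ S} ℓ i)^n = (-1)^n n! ∏ ℓ i`, so once `n!` is invertible every product of
`n` elements of a submodule `M` is a combination of `n`-th powers, and `M^(n+1)` is spanned by the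
`x^n y`. For `M = S^1(W)` and `n = p - 1` the factorial is `-1` by Wilson's theorem.
-/

open Finset

namespace Finset

variable {ι A : Type*} [Fintype ι] [DecidableEq ι] [CommRing A]

theorem sum_superset_neg_one_pow_card (T : Finset ι) :
    ∑ S, (if T ⊆ S then (-1 : A) ^ #S else 0) = if T = univ then (-1) ^ Fintype.card ι else 0 := by
  have h := Fintype.prod_add (fun _ : ι => (-1 : A)) fun a => if a ∉ T then 1 else 0
  have hsum : ∀ a, (-1 + if a ∉ T then 1 else 0 : A) = if a ∈ T then -1 else 0 := fun a => by
    split_ifs <;> simp_all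
  have hsub : ∀ S : Finset ι, T ⊆ S ↔ ∀ i ∉ S, i ∉ T := fun S =>
    ⟨fun h _ hS hT => hS (h hT), fun h i => not_imp_not.1 (h i)⟩
  simp only [hsum, prod_ite_zero, prod_const, one_pow, mem_compl, ← hsub, mul_ite, mul_one,
    mul_zero, mem_univ, forall_const, ← eq_univ_iff_forall, card_univ] at h
  exact h.symm

theorem image_univ_eq_univ_iff_bijective (g : ι → ι) : image g univ = univ ↔ g.Bijective := by
  rw [← coe_inj, Fintype.coe_image_univ, coe_univ, Set.range_eq_univ,
    Finite.surjective_iff_bijective]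

theorem card_filter_bijective : #{g : ι → ι | g.Bijective} = (Fintype.card ι).factorial := by
  rw [← Fintype.card_perm, ← Fintype.card_subtype]
  exact Fintype.card_congr Equiv.bijectiveEquiv

theorem sum_pow_card_eq_sum_ite_image_subset (ℓ : ι → A) (S : Finset ι) :
    (∑ i ∈ S, ℓ i) ^ Fintype.card ι =
      ∑ g : ι → ι, if image g univ ⊆ S then ∏ x, ℓ (g x) else 0 := by
  rw [← card_univ, ← prod_const, prod_univ_sum, ← sum_filter]
  congr 1
  ext g
  simp [image_subset_iff]

theorem sum_neg_one_pow_card_mul_sum_pow_card (ℓ : ι → A) :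
    ∑ S : Finset ι, (-1) ^ #S * (∑ i ∈ S, ℓ i) ^ Fintype.card ι =
      (-1) ^ Fintype.card ι * (Fintype.card ι).factorial * ∏ i, ℓ i := by
  calc ∑ S : Finset ι, (-1) ^ #S * (∑ i ∈ S, ℓ i) ^ Fintype.card ι
      = ∑ g : ι → ι, (∏ x, ℓ (g x)) * ∑ S, if image g univ ⊆ S then (-1 : A) ^ #S else 0 := by
        simp only [sum_pow_card_eq_sum_ite_image_subset, mul_sum, mul_ite, mul_zero]
        rw [sum_comm]
        simp only [mul_comm]
    -- the alternating sum over the supersets of `image g univ` vanishes unless `g` is onto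
    _ = ∑ g : ι → ι, if g.Bijective then (-1) ^ Fintype.card ι * ∏ i, ℓ i else 0 := by
        refine sum_congr rfl fun g _ => ?_
        rw [sum_superset_neg_one_pow_card]
        by_cases hg : g.Bijective
        · rw [if_pos ((image_univ_eq_univ_iff_bijective g).2 hg), if_pos hg, mul_comm,
            Fintype.prod_bijective g hg _ _ fun _ => rfl]
        · rw [if_neg (mt (image_univ_eq_univ_iff_bijective g).1 hg), if_neg hg, mul_zero]
    _ = _ := by
        rw [sum_ite, sum_const_zero, add_zero, sum_const, card_filter_bijective, nsmul_eq_mul]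
        ring

end Finset

namespace Submodule

variable {R A : Type*} [CommRing R] [CommRing A] [Algebra R A] (M : Submodule R A)

theorem neg_one_pow_mul_mem {x : A} (k : ℕ) (hx : x ∈ M) : (-1) ^ k * x ∈ M := by
  rcases neg_one_pow_eq_or A k with h | h <;> rw [h]
  · rwa [one_mul]
  · rw [neg_one_mul]; exact M.neg_mem hx

theorem prod_mem_span_pow_image {ι : Type*} [Fintype ι]
    (h : IsUnit ((Fintype.card ι).factorial : R)) {ℓ : ι → A} (hℓ : ∀ i, ℓ i ∈ M) :
    ∏ i, ℓ i ∈ span R ((· ^ Fintype.card ι) '' M) := by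
  classical
  have hsum : ∑ S : Finset ι, (-1) ^ #S * (∑ i ∈ S, ℓ i) ^ Fintype.card ι ∈
      span R ((· ^ Fintype.card ι) '' M) :=
    sum_mem fun S _ => neg_one_pow_mul_mem _ _ <|
      subset_span ⟨_, sum_mem fun i _ => hℓ i, rfl⟩
  rw [sum_neg_one_pow_card_mul_sum_pow_card, mul_assoc] at hsum
  rw [← smul_mem_iff_of_isUnit _ h, Algebra.smul_def, map_natCast]
  have := neg_one_pow_mul_mem _ (Fintype.card ι) hsum
  rwa [← mul_assoc, ← mul_pow, neg_one_mul, neg_neg, one_pow, one_mul] at this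

theorem pow_eq_span_pow_image {n : ℕ} (h : IsUnit (n.factorial : R)) :
    M ^ n = span R ((· ^ n) '' M) := by
  refine le_antisymm ?_ (span_le.2 ?_)
  · rw [pow_eq_span_pow_set, span_le]
    intro x hx
    obtain ⟨ℓ, hℓ, rfl⟩ := Set.mem_pow_iff_prod.1 hx
    simpa using M.prod_mem_span_pow_image (by simpa using h) hℓ
  · rintro _ ⟨x, hx, rfl⟩
    exact pow_mem_pow M hx n

theorem pow_succ_eq_span_pow_mul {n : ℕ} (h : IsUnit (n.factorial : R)) :
    M ^ (n + 1) = span R {f | ∃ x ∈ M, ∃ y ∈ M, f = x ^ n * y} := by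
  rw [pow_succ, pow_eq_span_pow_image M h, ← span_eq M, span_mul_span, span_eq]
  congr 1
  ext f
  simp [Set.mem_mul, eq_comm]

end Submodule

/-- Let `p` be a prime and `W` a finite-dimensional vector space over `𝔽_p` (realized as the
space of degree-one homogeneous elements of its symmetric algebra `𝔽_p[X₁,…,X_k]`). The
degree-`p` homogeneous component `S^p(W)` is spanned by the elements `x^(p-1)·y` with
`x, y ∈ W`. -/
theorem stmt2 (p : ℕ) (hp : p.Prime) (k : ℕ) :
    (MvPolynomial.homogeneousSubmodule (Fin k) (ZMod p) p : Submodule (ZMod p) _) =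
      Submodule.span (ZMod p)
        {f : MvPolynomial (Fin k) (ZMod p) |
          ∃ x ∈ MvPolynomial.homogeneousSubmodule (Fin k) (ZMod p) 1,
          ∃ y ∈ MvPolynomial.homogeneousSubmodule (Fin k) (ZMod p) 1,
            f = x ^ (p - 1) * y} := by
  have : Fact p.Prime := ⟨hp⟩
  have hunit : IsUnit ((p - 1).factorial : ZMod p) := by
    rw [ZMod.wilsons_lemma]
    exact isUnit_one.neg
  obtain ⟨n, rfl⟩ := Nat.exists_eq_add_one_of_ne_zero hp.ne_zero
  rw [Nat.add_sub_cancel] at hunit ⊢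
  rw [← MvPolynomial.homogeneousSubmodule_one_pow]
  exact Submodule.pow_succ_eq_span_pow_mul _ hunit
end

section
/- Let p be an odd prime and W a finite-dimensional 𝔽ₚ-vector space equipped with a bilinear alternating form b : W × W → 𝔽ₚ whose rank is not equal to 2. Then the degree-p homogeneous component S^p(W) of the symmetric algebra is spanned by the elements x^(p-1)·y with x, y ∈ W satisfying b(x,y) = 0. -/
/-!
Since `p - 1 < p`, every multinomial coefficient of degree `p - 1` is a unit in `𝔽ₚ`, and a
character sum over `t ∈ 𝔽ₚ^k` extracts each monomial of degree `p - 1` from the powers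
`(∑ tᵢ Xᵢ)^(p-1)`; hence `S^p(W)` is spanned by the products `x^(p-1) y`. If `b(x, y) ≠ 0`,
rescale to `b(x, y) = 1`. As the rank of `b` is not `2`, the plane `⟨x, y⟩` has a hyperbolic
pair `u, v` (`b(u, v) = 1`) in its orthogonal. Summing over `t ∈ 𝔽ₚˣ` the products
`(x + t v)^(p-1) (y + t^(p-2) u)` and `(x + t u)^(p-1) (y - t^(p-2) v)`, whose factors are
`b`-orthogonal, leaves `-2 x^(p-1) y` up to the admissible terms `v^(p-1) y` and `u^(p-1) y`.
-/

open MvPolynomial Finset Module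

section

variable {K : Type*} [Field K]

local notation "q" => Fintype.card K

section FiniteField

variable [Fintype K]

namespace FiniteField

theorem three_le_card_of_odd (hq : Odd q) : 3 ≤ q := by
  have := Fintype.one_lt_card (α := K)
  obtain ⟨m, hm⟩ := hq
  omega

theorem sum_pow_card_sub_one : ∑ c : K, c ^ (q - 1) = -1 := by
  classical
  have := Fintype.one_lt_card (α := K)
  rw [← sum_erase_add _ _ (mem_univ 0), zero_pow (by omega), add_zero,
    sum_congr rfl fun c hc => pow_card_sub_one_eq_one c (ne_of_mem_erase hc),
    sum_const, card_erase_of_mem (mem_univ _), card_univ, nsmul_one,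
    Nat.cast_sub Fintype.card_pos, cast_card_eq_zero, Nat.cast_one, zero_sub]

theorem prod_sum_pow_eq_zero {σ : Type*} [Fintype σ] {e : σ → ℕ}
    (he : ∑ i, e i ≤ Fintype.card σ * (q - 1)) (hne : ∃ i, e i ≠ q - 1) :
    ∏ i, ∑ c : K, c ^ e i = 0 := by
  by_contra h
  have hge : ∀ i, q - 1 ≤ e i := fun i => not_lt.1 fun hlt =>
    prod_ne_zero_iff.1 h i (mem_univ i) (sum_pow_lt_card_sub_one K (e i) hlt)
  obtain ⟨i, hi⟩ := hne
  have := sum_lt_sum (fun j _ => hge j) ⟨i, mem_univ i, lt_of_le_of_ne (hge i) hi.symm⟩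
  rw [sum_const, card_univ, smul_eq_mul] at this
  omega

theorem sum_prod_pow_smul_sum_smul_X_pow {σ : Type*} [Fintype σ] [DecidableEq σ]
    {β : σ →₀ ℕ} (hβ : β.degree = q - 1) :
    ∑ t : σ → K,
        (∏ i, t i ^ (q - 1 - β i)) • (∑ i, t i • X i : MvPolynomial σ K) ^ (q - 1) =
      monomial β ((-1 : K) ^ Fintype.card σ * β.multinomial) := by
  have hβle : ∀ i, β i ≤ q - 1 := fun i => hβ ▸ Finsupp.le_degree i β
  rw [Finsupp.degree_eq_sum] at hβ
  ext s
  simp only [coeff_sum, coeff_smul, coeff_linearCombination_X_pow_of_fintype, coeff_monomial,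
    smul_eq_mul]
  rw [Finsupp.sum_fintype _ _ fun _ => rfl]
  by_cases hs : ∑ i, s i = q - 1
  · have hexp : ∀ t : σ → K,
        (∏ i, t i ^ (q - 1 - β i)) * (s.multinomial * s.prod fun r m => t r ^ m) =
          s.multinomial * ∏ i, t i ^ (q - 1 - β i + s i) := fun t => by
      rw [Finsupp.prod_fintype _ _ fun _ => pow_zero _, mul_left_comm, ← prod_mul_distrib]
      simp only [pow_add]
    simp_rw [if_pos hs, hexp]
    rw [← mul_sum, ← Fintype.prod_sum fun i (c : K) => c ^ (q - 1 - β i + s i)]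
    split_ifs with hβs
    · subst hβs
      rw [prod_congr rfl fun i _ => by rw [Nat.sub_add_cancel (hβle i), sum_pow_card_sub_one],
        prod_const, card_univ, mul_comm]
    · rw [prod_sum_pow_eq_zero, mul_zero]
      · have : ∑ i, (q - 1 - β i) + ∑ i, β i = Fintype.card σ * (q - 1) := by
          rw [← sum_add_distrib, sum_congr rfl fun i _ => Nat.sub_add_cancel (hβle i)]
          simp
        rw [sum_add_distrib, hs]
        omega
      · by_contra! h
        exact hβs (Finsupp.ext fun i => by have := h i; have := hβle i; omega)
  · rw [if_neg (by rintro rfl; exact hs hβ)]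
    simp [hs]

variable [DecidableEq K] {R : Type*} [CommRing R] [Algebra K R]

theorem sum_units_pow_smul_add_pow (m : ℕ) (A V : R) :
    ∑ t : Kˣ, (t : K) ^ m • (A + (t : K) • V) ^ (q - 1) =
      ∑ j ∈ range q, (if q - 1 ∣ m + (q - 1 - j) then -1 else 0 : K) •
        (A ^ j * V ^ (q - 1 - j) * ((q - 1).choose j : R)) := by
  have hq : q - 1 + 1 = q := Nat.sub_add_cancel Fintype.card_pos
  simp_rw [add_pow, hq, smul_sum]
  rw [sum_comm]
  refine sum_congr rfl fun j _ => ?_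
  rw [← sum_pow_units, sum_smul]
  refine sum_congr rfl fun t _ => ?_
  rw [smul_pow, pow_add, mul_smul]
  simp only [mul_smul_comm, smul_mul_assoc]

theorem sum_units_add_pow (A V : R) :
    ∑ t : Kˣ, (A + (t : K) • V) ^ (q - 1) = -(A ^ (q - 1) + V ^ (q - 1)) := by
  have h := sum_units_pow_smul_add_pow (K := K) 0 A V
  simp only [pow_zero, one_smul, zero_add] at h
  have hq := Fintype.one_lt_card (α := K)
  rw [h, sum_eq_add_of_mem 0 (q - 1) (mem_range.2 (by omega)) (mem_range.2 (by omega)) (by omega)]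
  · simp
  · intro j hj hne
    rw [mem_range] at hj
    rw [if_neg, zero_smul]
    intro hd
    have := Nat.le_of_dvd (by omega) hd
    omega

theorem sum_units_pow_sub_two_smul_add_pow (hq : 3 ≤ q) (A V : R) :
    ∑ t : Kˣ, (t : K) ^ (q - 2) • (A + (t : K) • V) ^ (q - 1) = A ^ (q - 2) * V := by
  rw [sum_units_pow_smul_add_pow, sum_eq_single (q - 2)]
  · have hc : ((q - 1).choose (q - 2) : R) = -1 := by
      have hq0 : ((q : ℕ) : R) = 0 := by
        rw [← map_natCast (algebraMap K R), cast_card_eq_zero, map_zero]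
      rw [show q - 2 = q - 1 - 1 by omega, Nat.choose_symm (by omega), Nat.choose_one_right,
        Nat.cast_sub (by omega), hq0, Nat.cast_one, zero_sub]
    rw [if_pos (by rw [show q - 2 + (q - 1 - (q - 2)) = q - 1 by omega]), hc,
      show q - 1 - (q - 2) = 1 by omega]
    simp
  · intro j hj hne
    rw [mem_range] at hj
    rw [if_neg, zero_smul]
    rintro ⟨c, hc⟩
    rcases c with _ | _ | c
    · omega
    · omega
    · have : (q - 1) * 2 ≤ (q - 1) * (c + 2) := Nat.mul_le_mul_left _ (by omega)
      rw [show c + 1 + 1 = c + 2 by rfl] at hc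
      omega
  · simp

theorem sum_units_add_smul_pow_mul (hq : 3 ≤ q) (A B U V : R) :
    ∑ t : Kˣ, (A + (t : K) • V) ^ (q - 1) * (B + (t : K) ^ (q - 2) • U) =
      -(A ^ (q - 1) + V ^ (q - 1)) * B + A ^ (q - 2) * V * U := by
  simp_rw [mul_add, mul_smul_comm, ← smul_mul_assoc, sum_add_distrib, ← sum_mul,
    sum_units_add_pow, sum_units_pow_sub_two_smul_add_pow hq]

end FiniteField

end FiniteField

theorem Finsupp.natCast_multinomial_ne_zero {σ : Type*} {p : ℕ} [Fact p.Prime]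
    {β : σ →₀ ℕ} (hβ : β.degree < p) : (β.multinomial : ZMod p) ≠ 0 := by
  rw [Ne, ZMod.natCast_eq_zero_iff]
  intro h
  have hspec := Nat.multinomial_spec β.support β
  rw [← Finsupp.multinomial_eq, ← Finsupp.degree_apply] at hspec
  have := (Nat.Prime.dvd_factorial Fact.out).1 (hspec ▸ dvd_mul_of_dvd_right h _)
  omega

theorem MvPolynomial.homogeneousSubmodule_le_span_pow {σ : Type*} [Fintype σ] (p : ℕ)
    [Fact p.Prime] :
    homogeneousSubmodule σ (ZMod p) (p - 1) ≤
      Submodule.span (ZMod p)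
        (Set.range fun t : σ → ZMod p => (∑ i, t i • X i) ^ (p - 1)) := by
  classical
  rw [homogeneousSubmodule_eq_finsupp_supported, AddMonoidAlgebra.supported_eq_span_single,
    Submodule.span_le]
  rintro _ ⟨β, hβ, rfl⟩
  dsimp only
  have hc : (-1 : ZMod p) ^ Fintype.card σ * β.multinomial ≠ 0 :=
    mul_ne_zero (by simp) (Finsupp.natCast_multinomial_ne_zero
      (by rw [hβ.out]; exact Nat.sub_lt (Fact.out : p.Prime).pos one_pos))
  have := FiniteField.sum_prod_pow_smul_sum_smul_X_pow (K := ZMod p) (β := β)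
    (by rw [ZMod.card]; exact hβ)
  rw [ZMod.card] at this
  rw [SetLike.mem_coe, single_eq_monomial, ← Submodule.smul_mem_iff _ hc, smul_monomial,
    smul_eq_mul, mul_one, ← this]
  exact Submodule.sum_mem _ fun t _ => Submodule.smul_mem _ _ (Submodule.subset_span ⟨t, rfl⟩)

namespace LinearMap.BilinForm

variable {V R : Type*} [AddCommGroup V] [Module K V] [CommRing R] [Algebra K R]
  {b : LinearMap.BilinForm K V}

def orthoPowMul (b : LinearMap.BilinForm K V) (ℓ : V →ₗ[K] R) (n : ℕ) : Set R :=
  {f | ∃ v w, b v w = 0 ∧ f = ℓ v ^ n * ℓ w}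

theorem pow_mul_mem_orthoPowMul (ℓ : V →ₗ[K] R) {n : ℕ} {v w : V} (h : b v w = 0) :
    ℓ v ^ n * ℓ w ∈ b.orthoPowMul ℓ n :=
  ⟨v, w, h, rfl⟩

namespace IsAlt

theorem ker_eq_ker_prod_of_forall_eq_zero (hb : b.IsAlt) {x y : V} (hxy : b x y = 1)
    (h : ∀ u ∈ ker ((b x).prod (b y)), ∀ v ∈ ker ((b x).prod (b y)), b u v = 0) :
    ker b = ker ((b x).prod (b y)) := by
  have hyx : b y x = -1 := by rw [← hb.neg_eq x y, hxy]
  ext u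
  simp only [mem_ker, prod_apply, Function.prod, Prod.mk_eq_zero]
  constructor
  · intro hu
    rw [← hb.neg_eq u x, ← hb.neg_eq u y, hu]
    simp
  · intro hu
    ext w
    have hux : b u x = 0 := by rw [← hb.neg_eq x u, hu.1, neg_zero]
    have huy : b u y = 0 := by rw [← hb.neg_eq y u, hu.2, neg_zero]
    have hw' : w - b x w • y + b y w • x ∈ ker ((b x).prod (b y)) := by
      simp [hxy, hyx, hb.self_eq_zero]
    have := h u (by simpa using hu) _ hw'
    simpa [hux, huy] using this

theorem finrank_ker_prod_add_two [FiniteDimensional K V] (hb : b.IsAlt) {x y : V}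
    (hxy : b x y = 1) : finrank K (ker ((b x).prod (b y))) + 2 = finrank K V := by
  have hyx : b y x = -1 := by rw [← hb.neg_eq x y, hxy]
  have hsurj : Function.Surjective ((b x).prod (b y)) := by
    rintro ⟨s, r⟩
    refine ⟨s • y - r • x, ?_⟩
    simp [hxy, hyx, hb.self_eq_zero]
  have := finrank_range_add_finrank_ker ((b x).prod (b y))
  rw [range_eq_top.2 hsurj, finrank_top, finrank_prod, finrank_self] at this
  omega

theorem exists_orthogonal_hyperbolic_pair [FiniteDimensional K V] (hb : b.IsAlt)
    (hrank : finrank K V - finrank K (ker b) ≠ 2) {x y : V} (hxy : b x y = 1) :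
    ∃ u v, b x u = 0 ∧ b y u = 0 ∧ b x v = 0 ∧ b y v = 0 ∧ b u v = 1 := by
  by_contra! hno
  refine hrank ?_
  rw [ker_eq_ker_prod_of_forall_eq_zero hb hxy, ← finrank_ker_prod_add_two hb hxy,
    Nat.add_sub_cancel_left]
  intro u hu v hv
  simp only [mem_ker, prod_apply, Function.prod, Prod.mk_eq_zero] at hu hv
  by_contra huv
  refine hno u ((b u v)⁻¹ • v) hu.1 hu.2 (by simp [hv.1]) (by simp [hv.2]) ?_
  simp [huv]

end IsAlt

section FiniteField

variable [Fintype K] (ℓ : V →ₗ[K] R)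

theorem neg_pow_add_pow_mul_add_mem_span (hq : 3 ≤ q) {x y u v : V} (hxy : b x y = 1)
    (hxu : b x u = 0) (hvy : b v y = 0) (hvu : b v u = -1) :
    -(ℓ x ^ (q - 1) + ℓ v ^ (q - 1)) * ℓ y + ℓ x ^ (q - 2) * ℓ v * ℓ u ∈
      Submodule.span K (b.orthoPowMul ℓ (q - 1)) := by
  classical
  rw [← FiniteField.sum_units_add_smul_pow_mul hq]
  refine Submodule.sum_mem _ fun t _ => Submodule.subset_span
    ⟨x + (t : K) • v, y + (t : K) ^ (q - 2) • u, ?_, by simp⟩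
  have ht : (t : K) * (t : K) ^ (q - 2) = 1 := by
    rw [← pow_succ', show q - 2 + 1 = q - 1 by omega]
    exact FiniteField.pow_card_sub_one_eq_one _ t.ne_zero
  simp [hxy, hxu, hvy, hvu, ht]

namespace IsAlt

theorem pow_mul_mem_span_of_hyperbolic_pair (hq : Odd q) (hb : b.IsAlt) {x y u v : V}
    (hxy : b x y = 1) (hxu : b x u = 0) (hyu : b y u = 0) (hxv : b x v = 0) (hyv : b y v = 0)
    (huv : b u v = 1) :
    ℓ x ^ (q - 1) * ℓ y ∈ Submodule.span K (b.orthoPowMul ℓ (q - 1)) := by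
  have hq3 := FiniteField.three_le_card_of_odd hq
  have h2 : (2 : K) ≠ 0 := Ring.two_ne_zero fun h => by
    have := FiniteField.even_card_of_char_two h
    obtain ⟨m, hm⟩ := hq
    omega
  have huy : b u y = 0 := by rw [← hb.neg_eq, hyu, neg_zero]
  have hvy : b v y = 0 := by rw [← hb.neg_eq, hyv, neg_zero]
  have hvu : b v u = -1 := by rw [← hb.neg_eq, huv]
  have hs₁ := neg_pow_add_pow_mul_add_mem_span ℓ hq3 hxy hxu hvy hvu
  have hs₂ := neg_pow_add_pow_mul_add_mem_span ℓ hq3 hxy (u := -v) (v := u)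
    (by simp [hxv]) huy (by simp [huv])
  have hv := Submodule.subset_span (R := K) (pow_mul_mem_orthoPowMul ℓ (n := q - 1) hvy)
  have hu := Submodule.subset_span (R := K) (pow_mul_mem_orthoPowMul ℓ (n := q - 1) huy)
  have key : (-2 : K) • (ℓ x ^ (q - 1) * ℓ y) =
      (-(ℓ x ^ (q - 1) + ℓ v ^ (q - 1)) * ℓ y + ℓ x ^ (q - 2) * ℓ v * ℓ u) +
      (-(ℓ x ^ (q - 1) + ℓ u ^ (q - 1)) * ℓ y + ℓ x ^ (q - 2) * ℓ u * ℓ (-v)) +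
      ℓ v ^ (q - 1) * ℓ y + ℓ u ^ (q - 1) * ℓ y := by
    rw [map_neg, neg_smul, two_smul]
    ring
  rw [← Submodule.smul_mem_iff _ (neg_ne_zero.2 h2), key]
  exact add_mem (add_mem (add_mem hs₁ hs₂) hv) hu

theorem pow_mul_mem_span [FiniteDimensional K V] (hq : Odd q) (hb : b.IsAlt)
    (hrank : finrank K V - finrank K (ker b) ≠ 2) (x y : V) :
    ℓ x ^ (q - 1) * ℓ y ∈ Submodule.span K (b.orthoPowMul ℓ (q - 1)) := by
  by_cases h : b x y = 0
  · exact Submodule.subset_span (pow_mul_mem_orthoPowMul ℓ h)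
  have hxy : b x ((b x y)⁻¹ • y) = 1 := by simp [h]
  obtain ⟨u, v, hxu, hyu, hxv, hyv, huv⟩ := hb.exists_orthogonal_hyperbolic_pair hrank hxy
  have := Submodule.smul_mem _ (b x y)
    (pow_mul_mem_span_of_hyperbolic_pair ℓ hq hb hxy hxu hyu hxv hyv huv)
  rwa [map_smul, mul_smul_comm, smul_inv_smul₀ h] at this

end IsAlt

end FiniteField

end LinearMap.BilinForm

end

theorem MvPolynomial.homogeneousSubmodule_eq_span_orthoPowMul {σ : Type*} [Fintype σ] {p : ℕ}
    [Fact p.Prime] (hodd : Odd p) {b : LinearMap.BilinForm (ZMod p) (σ → ZMod p)}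
    (hb : b.IsAlt) (hrank : Fintype.card σ - finrank (ZMod p) (LinearMap.ker b) ≠ 2) :
    homogeneousSubmodule σ (ZMod p) p = Submodule.span (ZMod p)
      (b.orthoPowMul (Fintype.linearCombination (ZMod p) X) (p - 1)) := by
  set ℓ := Fintype.linearCombination (ZMod p) (X : σ → MvPolynomial σ (ZMod p))
  have hS₁ : homogeneousSubmodule σ (ZMod p) 1 = LinearMap.range ℓ := by
    rw [homogeneousSubmodule_one_eq_span_X, Fintype.range_linearCombination]
  have hSp : homogeneousSubmodule σ (ZMod p) p =
      homogeneousSubmodule σ (ZMod p) 1 ^ (p - 1) * homogeneousSubmodule σ (ZMod p) 1 := by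
    rw [← pow_succ, homogeneousSubmodule_one_pow, Nat.sub_add_cancel (Fact.out : p.Prime).pos]
  refine le_antisymm ?_ (Submodule.span_le.2 ?_)
  · rw [hSp, homogeneousSubmodule_one_pow, hS₁, LinearMap.range_eq_map, ← Submodule.span_univ,
      Submodule.map_span]
    refine (mul_le_mul' (homogeneousSubmodule_le_span_pow p) le_rfl).trans ?_
    rw [Submodule.span_mul_span, Submodule.span_le]
    rintro _ ⟨_, ⟨x, rfl⟩, _, ⟨y, -, rfl⟩, rfl⟩
    have := hb.pow_mul_mem_span ℓ (by rwa [ZMod.card]) (by rwa [finrank_fintype_fun_eq_card]) x y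
    rw [ZMod.card] at this
    exact this
  · rintro _ ⟨v, w, -, rfl⟩
    rw [SetLike.mem_coe, hSp, hS₁]
    exact Submodule.mul_mem_mul (Submodule.pow_mem_pow _ (LinearMap.mem_range_self ℓ v) _)
      (LinearMap.mem_range_self ℓ w)

/-- Let `p` be an odd prime and `W` a finite-dimensional `𝔽_p`-vector space (realized as
`𝔽_p^k`, embedded as the degree-one part of the symmetric algebra `𝔽_p[X₁,…,X_k]` via
`w ↦ ∑ i, wᵢ Xᵢ`) with a bilinear alternating form `b` of rank `≠ 2`. Then `S^p(W)` is
spanned by the elements `x^(p-1)·y` with `b(x,y) = 0`. -/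
theorem stmt3 (p : ℕ) [Fact p.Prime] (hodd : Odd p) (k : ℕ)
    (b : (Fin k → ZMod p) →ₗ[ZMod p] (Fin k → ZMod p) →ₗ[ZMod p] ZMod p)
    (halt : ∀ v, b v v = 0)
    (hrank : k - Module.finrank (ZMod p) (LinearMap.ker b) ≠ 2) :
    (homogeneousSubmodule (Fin k) (ZMod p) p : Submodule (ZMod p) _) =
      Submodule.span (ZMod p)
        {f : MvPolynomial (Fin k) (ZMod p) |
          ∃ v w : Fin k → ZMod p, b v w = 0 ∧
            f = (∑ i, C (v i) * X i) ^ (p - 1) * (∑ i, C (w i) * X i)} := by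
  have hℓ : ∀ v : Fin k → ZMod p, ∑ i, C (v i) * X i = Fintype.linearCombination (ZMod p) X v :=
    fun v => by simp [Fintype.linearCombination_apply, smul_eq_C_mul]
  simp_rw [hℓ]
  exact homogeneousSubmodule_eq_span_orthoPowMul hodd halt (by rwa [Fintype.card_fin])
end

section
/- Let p be an odd prime and W a 2-dimensional 𝔽ₚ-vector space with a non-degenerate alternating bilinear form b. Then the subspace of S^p(W) spanned by elements x^(p-1)·y with b(x,y)=0 has dimension 2, while S^p(W) itself has dimension p+1. -/
/-!
If `b x y = 0` with `x ≠ 0`, then `y` is a multiple of `x`: otherwise `x, y` would span the plane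
and `x` would lie in the radical of `b`. So every generator `x^(p-1) y` is a multiple of `x^p`,
and over `𝔽ₚ` Frobenius gives `(∑ xᵢ Xᵢ)^p = ∑ xᵢ Xᵢ^p`. Hence the span is that of `X₀^p, X₁^p`,
which are distinct monomials. The degree-`n` part of a polynomial ring in `k` variables has the
monomial basis indexed by the multisets of size `n`, of which there are `(k + n - 1).choose n`.
-/

open MvPolynomial

theorem LinearMap.IsAlt.exists_eq_smul_of_apply_eq_zero {K V : Type*} [Field K] [AddCommGroup V]
    [Module K V] (hV : Module.finrank K V = 2) {b : V →ₗ[K] V →ₗ[K] K} (halt : b.IsAlt)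
    (hnd : b.SeparatingLeft) {x y : V} (hx : x ≠ 0) (hxy : b x y = 0) : ∃ c : K, y = c • x := by
  by_contra! hy
  have hli : LinearIndependent K ![x, y] :=
    (LinearIndependent.pair_iff' hx).mpr fun c h => hy c h.symm
  have hspan : Submodule.span K (Set.range ![x, y]) = ⊤ :=
    hli.span_eq_top_of_card_eq_finrank (by simp [hV])
  refine hx (hnd x fun z => ?_)
  have hz : z ∈ Submodule.span K (Set.range ![x, y]) := hspan ▸ Submodule.mem_top
  induction hz using Submodule.span_induction with
  | mem z hz =>
    obtain ⟨i, rfl⟩ := hz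
    fin_cases i
    · exact halt x
    · exact hxy
  | zero => simp
  | add _ _ _ _ h₁ h₂ => simp [h₁, h₂]
  | smul _ _ _ h => simp [h]

namespace MvPolynomial

variable {σ R : Type*}

theorem finrank_homogeneousSubmodule [Fintype σ] [CommRing R] [StrongRankCondition R] (n : ℕ) :
    Module.finrank R (homogeneousSubmodule σ R n) = (Fintype.card σ + n - 1).choose n := by
  classical
  have hdeg : {d : σ →₀ ℕ | d.degree = n} = ↑((Finset.univ : Finset σ).finsuppAntidiag n) := by
    ext d
    simp [Finsupp.degree_eq_sum]
  rw [homogeneousSubmodule_eq_finsupp_supported, hdeg]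
  refine (Module.finrank_eq_nat_card_basis (basisRestrictSupport R _)).trans ?_
  rw [Nat.card_coe_set_eq, Set.ncard_coe_finset, Finset.card_finsuppAntidiag_nat_eq_choose,
    Finset.card_univ]

theorem linearIndependent_X_pow [CommSemiring R] [Nontrivial R] {n : ℕ} (hn : n ≠ 0) :
    LinearIndependent R (fun i : σ => (X i : MvPolynomial σ R) ^ n) := by
  simp_rw [X_pow_eq_monomial]
  exact ((basisMonomials σ R).linearIndependent.comp _ (Finsupp.single_left_injective hn))

section linearForm

variable [Fintype σ]

noncomputable def linearForm [CommSemiring R] (v : σ → R) : MvPolynomial σ R :=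
  ∑ i, C (v i) * X i

theorem linearForm_zero [CommSemiring R] : linearForm (0 : σ → R) = 0 := by
  simp [linearForm]

theorem linearForm_smul [CommSemiring R] (c : R) (v : σ → R) :
    linearForm (c • v) = C c * linearForm v := by
  simp [linearForm, Finset.mul_sum, mul_assoc]

theorem linearForm_single [CommSemiring R] [DecidableEq σ] (i : σ) :
    linearForm (Pi.single i (1 : R)) = X i := by
  simp [linearForm, Pi.single_apply]

theorem linearForm_pow_char {p : ℕ} [Fact p.Prime] (v : σ → ZMod p) :
    linearForm v ^ p = ∑ i, C (v i) * X i ^ p := by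
  rw [← expand_zmod]
  simp [linearForm]

theorem span_orthogonal_pow_pred_mul_eq_span_X_pow [DecidableEq σ] {p : ℕ}
    [Fact p.Prime] (hσ : Fintype.card σ = 2)
    {b : (σ → ZMod p) →ₗ[ZMod p] (σ → ZMod p) →ₗ[ZMod p] ZMod p} (halt : b.IsAlt)
    (hnd : b.SeparatingLeft) :
    Submodule.span (ZMod p)
        {f | ∃ v w, b v w = 0 ∧ f = linearForm v ^ (p - 1) * linearForm w} =
      Submodule.span (ZMod p) (Set.range fun i => (X i : MvPolynomial σ (ZMod p)) ^ p) := by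
  have hp : p.Prime := Fact.out
  apply le_antisymm
  · rw [Submodule.span_le]
    rintro _ ⟨v, w, hvw, rfl⟩
    rcases eq_or_ne v 0 with rfl | hv
    · simp [linearForm_zero, zero_pow (Nat.sub_ne_zero_of_lt hp.one_lt)]
    obtain ⟨c, rfl⟩ := halt.exists_eq_smul_of_apply_eq_zero (by simp [hσ]) hnd hv hvw
    have hpow : linearForm v ^ (p - 1) * linearForm (c • v) = c • linearForm v ^ p := by
      rw [linearForm_smul, smul_eq_C_mul, mul_left_comm, ← pow_succ,
        Nat.sub_add_cancel hp.one_lt.le]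
    rw [hpow, linearForm_pow_char]
    refine Submodule.smul_mem _ _ (Submodule.sum_mem _ fun i _ => ?_)
    rw [← smul_eq_C_mul]
    exact Submodule.smul_mem _ _ (Submodule.subset_span ⟨i, rfl⟩)
  · rw [Submodule.span_le]
    rintro _ ⟨i, rfl⟩
    refine Submodule.subset_span ⟨Pi.single i 1, Pi.single i 1, halt _, ?_⟩
    rw [linearForm_single, ← pow_succ, Nat.sub_add_cancel hp.one_lt.le]

end linearForm

end MvPolynomial

theorem stmt4_general (p : ℕ) [Fact p.Prime]
    (b : (Fin 2 → ZMod p) →ₗ[ZMod p] (Fin 2 → ZMod p) →ₗ[ZMod p] ZMod p)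
    (halt : ∀ v, b v v = 0)
    (hnd : ∀ v : Fin 2 → ZMod p, (∀ w, b v w = 0) → v = 0) :
    Module.finrank (ZMod p)
      (Submodule.span (ZMod p)
        {f : MvPolynomial (Fin 2) (ZMod p) |
          ∃ v w : Fin 2 → ZMod p, b v w = 0 ∧
            f = (∑ i, C (v i) * X i) ^ (p - 1) * (∑ i, C (w i) * X i)}) = 2 ∧
    Module.finrank (ZMod p)
      (homogeneousSubmodule (Fin 2) (ZMod p) p : Submodule (ZMod p) _) = p + 1 := by
  constructor
  · erw [span_orthogonal_pow_pred_mul_eq_span_X_pow (Fintype.card_fin 2) halt hnd,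
      finrank_span_eq_card (linearIndependent_X_pow (Fact.out : p.Prime).ne_zero), Fintype.card_fin]
  · rw [finrank_homogeneousSubmodule, Fintype.card_fin, show 2 + p - 1 = p + 1 by omega,
      Nat.choose_succ_self_right]

/-- Let `p` be an odd prime and `W` a 2-dimensional `𝔽_p`-vector space (realized as `𝔽_p²`,
embedded as the degree-one part of `𝔽_p[X₀,X₁]` via `w ↦ ∑ i, wᵢ Xᵢ`) with a non-degenerate
alternating bilinear form `b`. Then the subspace of `S^p(W)` spanned by the `x^(p-1)·y` with
`b(x,y)=0` has dimension `2`, while `S^p(W)` has dimension `p+1`. -/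
theorem stmt4 (p : ℕ) [Fact p.Prime] (hodd : Odd p)
    (b : (Fin 2 → ZMod p) →ₗ[ZMod p] (Fin 2 → ZMod p) →ₗ[ZMod p] ZMod p)
    (halt : ∀ v, b v v = 0)
    (hnd : ∀ v : Fin 2 → ZMod p, (∀ w, b v w = 0) → v = 0) :
    Module.finrank (ZMod p)
      (Submodule.span (ZMod p)
        {f : MvPolynomial (Fin 2) (ZMod p) |
          ∃ v w : Fin 2 → ZMod p, b v w = 0 ∧
            f = (∑ i, C (v i) * X i) ^ (p - 1) * (∑ i, C (w i) * X i)}) = 2 ∧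
    Module.finrank (ZMod p)
      (homogeneousSubmodule (Fin 2) (ZMod p) p : Submodule (ZMod p) _) = p + 1 :=
  stmt4_general p b halt hnd
end

section
/- Let p be a prime and W a finite-dimensional 𝔽ₚ-vector space. If A ∈ S^p(W) is a homogeneous element of degree p such that A(ψ) = 0 for every linear functional ψ : W → 𝔽ₚ, then A = 0, i.e., the evaluation map A ↦ (ψ ↦ A(ψ)) is injective on S^p(W). -/
open MvPolynomial Finsupp

/-- Let `p` be a prime and `W` a finite-dimensional `𝔽_p`-vector space with basis `X₁,…,X_k`.
If `A ∈ S^p(W)` is homogeneous of degree `p` and its evaluation at every linear functional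
`ψ : W → 𝔽_p` (i.e. at every point of `𝔽_p^k`) vanishes, then `A = 0`. -/
theorem stmt5 (p : ℕ) (hp : p.Prime) (k : ℕ)
    (A : MvPolynomial (Fin k) (ZMod p))
    (hA : A ∈ MvPolynomial.homogeneousSubmodule (Fin k) (ZMod p) p)
    (h0 : ∀ r : Fin k → ZMod p, MvPolynomial.eval r A = 0) :
    A = 0 := by
  haveI : Fact p.Prime := ⟨hp⟩
  classical
  have hp2 : 2 ≤ p := hp.two_le
  have hAhom : A.IsHomogeneous p := (MvPolynomial.mem_homogeneousSubmodule _ _).1 hA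
  set c : Fin k → ZMod p := fun i => A.coeff (Finsupp.single i p) with hc
  set B : MvPolynomial (Fin k) (ZMod p) := ∑ i, C (c i) * X i with hB
  set D : MvPolynomial (Fin k) (ZMod p) :=
    (A - ∑ i, C (c i) * X i ^ p) + B with hD
  -- only `single i p` can be a support monomial with i-degree ≥ p
  have hsingle : ∀ (d : Fin k →₀ ℕ) (i : Fin k), Finsupp.degree d = p → p ≤ d i →
      d = Finsupp.single i p := by
    intro d i hdeg hdi
    have hle := Finsupp.le_degree i d
    have hdi' : d i = p := by omega
    ext j
    rcases eq_or_ne j i with rfl | hj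
    · simp [hdi', Finsupp.single_apply]
    · rw [Finsupp.single_apply, if_neg (Ne.symm hj)]
      by_contra h
      have hjs : j ∈ d.support := Finsupp.mem_support_iff.2 h
      have his : i ∈ d.support := Finsupp.mem_support_iff.2 (by omega)
      have hsub : ({i, j} : Finset (Fin k)) ⊆ d.support := by
        intro x hx
        simp only [Finset.mem_insert, Finset.mem_singleton] at hx
        rcases hx with rfl | rfl <;> assumption
      have hpair : d i + d j ≤ ∑ x ∈ d.support, d x := by
        rw [← Finset.sum_pair (Ne.symm hj)]
        exact Finset.sum_le_sum_of_subset hsub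
      have : ∑ x ∈ d.support, d x = p := hdeg
      omega
  have hcoeffA : ∀ (d : Fin k →₀ ℕ) (i : Fin k), p ≤ d i → d ≠ Finsupp.single i p →
      A.coeff d = 0 := by
    intro d i hdi hne
    rcases eq_or_ne (Finsupp.degree d) p with hdeg | hdeg
    · exact absurd (hsingle d i hdeg hdi) hne
    · exact hAhom.coeff_eq_zero hdeg
  -- single-injectivity helpers
  have hsp : ∀ j i : Fin k, (Finsupp.single j p : Fin k →₀ ℕ) = Finsupp.single i p ↔ j = i := by
    intro j i
    constructor
    · intro h
      by_contra hji
      have h' := DFunLike.congr_fun h j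
      rw [Finsupp.single_apply, Finsupp.single_apply, if_pos rfl, if_neg (Ne.symm hji)] at h'
      omega
    · rintro rfl; rfl
  have hs1 : ∀ j i : Fin k, (Finsupp.single j 1 : Fin k →₀ ℕ) ≠ Finsupp.single i p := by
    intro j i h
    have h' := DFunLike.congr_fun h j
    rw [Finsupp.single_apply, Finsupp.single_apply, if_pos rfl] at h'
    rcases eq_or_ne i j with rfl | hij
    · rw [if_pos rfl] at h'; omega
    · rw [if_neg hij] at h'; omega
  -- D vanishes everywhere
  have hDeval : ∀ r : Fin k → ZMod p, eval r D = 0 := by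
    intro r
    have hxp : ∀ i : Fin k, (r i) ^ p = r i := fun i => ZMod.pow_card (r i)
    simp [hD, hB, h0 r, hxp]
  -- D has all individual degrees < p
  have hDdeg : D ∈ MvPolynomial.restrictDegree (Fin k) (ZMod p) (Fintype.card (ZMod p) - 1) := by
    rw [ZMod.card, MvPolynomial.mem_restrictDegree]
    intro s hs i
    by_contra hlt
    push_neg at hlt
    have hple : p ≤ s i := by omega
    have hcoeff : D.coeff s = 0 := by
      simp only [hD, hB, MvPolynomial.coeff_add, MvPolynomial.coeff_sub,
        MvPolynomial.coeff_sum, MvPolynomial.coeff_C_mul, MvPolynomial.coeff_X',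
        MvPolynomial.coeff_X_pow]
      by_cases hsi : s = Finsupp.single i p
      · subst hsi
        rw [Finset.sum_eq_single i (fun j _ hji => by
              rw [if_neg (fun h => hji ((hsp j i).1 h)), mul_zero])
            (by simp)]
        have e2 : ∀ j ∈ (Finset.univ : Finset (Fin k)),
            c j * (if (Finsupp.single j 1 : Fin k →₀ ℕ) = Finsupp.single i p
              then (1 : ZMod p) else 0) = 0 := by
          intro j _
          rw [if_neg (hs1 j i), mul_zero]
        rw [Finset.sum_eq_zero e2, if_pos rfl, mul_one]
        simp [hc]
      · have hA0 : A.coeff s = 0 := hcoeffA s i hple hsi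
        have h1 : ∀ j : Fin k, (Finsupp.single j p : Fin k →₀ ℕ) ≠ s := by
          intro j h
          rcases eq_or_ne j i with rfl | hji
          · exact hsi h.symm
          · rw [← h, Finsupp.single_apply, if_neg hji] at hple
            omega
        have h2 : ∀ j : Fin k, (Finsupp.single j 1 : Fin k →₀ ℕ) ≠ s := by
          intro j h
          rw [← h, Finsupp.single_apply] at hple
          split_ifs at hple <;> omega
        rw [hA0]
        have e1 : ∀ j ∈ (Finset.univ : Finset (Fin k)),
            c j * (if (Finsupp.single j p : Fin k →₀ ℕ) = s then (1 : ZMod p) else 0) = 0 := by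
          intro j _; rw [if_neg (h1 j), mul_zero]
        have e2 : ∀ j ∈ (Finset.univ : Finset (Fin k)),
            c j * (if (Finsupp.single j 1 : Fin k →₀ ℕ) = s then (1 : ZMod p) else 0) = 0 := by
          intro j _; rw [if_neg (h2 j), mul_zero]
        rw [Finset.sum_eq_zero e1, Finset.sum_eq_zero e2]
        ring
    exact (MvPolynomial.mem_support_iff.1 hs) hcoeff
  have hD0 : D = 0 :=
    MvPolynomial.eq_zero_of_eval_eq_zero (Fin k) (ZMod p) D hDeval hDdeg
  -- homogeneous component of degree 1 of D is B
  have hcomp : MvPolynomial.homogeneousComponent 1 D = B := by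
    rw [hD, map_add, map_sub]
    have hA1 : MvPolynomial.homogeneousComponent 1 A = 0 := by
      rw [MvPolynomial.homogeneousComponent_of_mem hA, if_neg (by omega : 1 ≠ p)]
    have hXp : MvPolynomial.homogeneousComponent 1 (∑ i, C (c i) * X i ^ p) = 0 := by
      rw [map_sum]
      refine Finset.sum_eq_zero fun i _ => ?_
      have hmem : (C (c i) * X i ^ p : MvPolynomial (Fin k) (ZMod p)) ∈
          MvPolynomial.homogeneousSubmodule (Fin k) (ZMod p) p := by
        rw [MvPolynomial.mem_homogeneousSubmodule]
        apply MvPolynomial.IsHomogeneous.C_mul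
        simpa using (MvPolynomial.isHomogeneous_X _ (i : Fin k)).pow p
      rw [MvPolynomial.homogeneousComponent_of_mem hmem, if_neg (by omega : 1 ≠ p)]
    have hB1 : MvPolynomial.homogeneousComponent 1 B = B := by
      have hmem : B ∈ MvPolynomial.homogeneousSubmodule (Fin k) (ZMod p) 1 := by
        rw [hB]
        refine Submodule.sum_mem _ fun i _ => ?_
        rw [MvPolynomial.mem_homogeneousSubmodule]
        apply MvPolynomial.IsHomogeneous.C_mul
        simpa using MvPolynomial.isHomogeneous_X (R := ZMod p) (i : Fin k)
      rw [MvPolynomial.homogeneousComponent_of_mem hmem, if_pos rfl]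
    rw [hA1, hXp, hB1, sub_zero, zero_add]
  rw [hD0, map_zero] at hcomp
  -- so each c i = 0
  have hci : ∀ i, c i = 0 := by
    intro i
    have hcoe := congrArg (MvPolynomial.coeff (Finsupp.single i 1)) hcomp.symm
    rw [hB, MvPolynomial.coeff_sum] at hcoe
    simp only [MvPolynomial.coeff_C_mul, MvPolynomial.coeff_X'] at hcoe
    rw [Finset.sum_eq_single i (fun j _ hji => by
          rw [if_neg fun h => hji (by
            have h' := DFunLike.congr_fun h j
            rw [Finsupp.single_apply, Finsupp.single_apply, if_pos rfl] at h'
            rcases eq_or_ne i j with rfl | hij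
            · rfl
            · rw [if_neg hij] at h'; omega), mul_zero])
        (by simp)] at hcoe
    simpa using hcoe
  -- conclude
  have hfin : A = D - B + ∑ i, C (c i) * X i ^ p := by rw [hD]; ring
  rw [hfin, hD0, ← hcomp]
  simp [hci]
end

section
/- Let P be a finite p-group, H a cyclic subgroup of P, g an element centralizing H, N a normal subgroup of P, and S a subgroup of P containing N with N_P(S) ≥ S. Then the map sending HxN_P(S) to H̃x̃N_{P̃}(S̃) is a bijection from the double cosets H\P/N_P(S) to the double cosets H̃\P̃/N_{P̃}(S̃), where tildes denote images modulo N; moreover H^x ∩ N_P(S) ≤ S if and only if H̃^x̃ ∩ N_{P̃}(S̃) ≤ S̃. -/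
/-! Since `N ≤ S`, the kernel of `π : P → P ⧸ N` lies in `S ≤ N_P(S)`. Hence `π` carries `N_P(S)` onto
`N_{P̃}(S̃)`, double cosets modulo a subgroup containing `ker π` correspond bijectively, and
`π` commutes with intersecting with `N_P(S)`, so `H^x ∩ N_P(S) ≤ S` can be tested after applying `π`. -/

namespace Subgroup

variable {G G' : Type*} [Group G] [Group G'] {f : G →* G'}

theorem map_inf_eq_of_ker_le (L : Subgroup G) {K : Subgroup G} (hK : f.ker ≤ K) :
    (L ⊓ K).map f = L.map f ⊓ K.map f := by
  refine le_antisymm (map_inf_le L K f) ?_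
  rintro _ ⟨⟨a, haL, rfl⟩, b, hbK, hba⟩
  have hab : b⁻¹ * a ∈ K := hK (by simp [MonoidHom.mem_ker, hba])
  exact ⟨a, ⟨haL, by simpa using K.mul_mem hbK hab⟩, rfl⟩

theorem inf_le_iff_map_inf_map_le (L : Subgroup G) {K S : Subgroup G} (hS : f.ker ≤ S)
    (hSK : S ≤ K) : L ⊓ K ≤ S ↔ L.map f ⊓ K.map f ≤ S.map f := by
  rw [← map_inf_eq_of_ker_le L (hS.trans hSK), map_le_map_iff, sup_eq_left.2 hS]

theorem normalizer_map_of_surjective (hf : Function.Surjective f) {S : Subgroup G}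
    (hS : f.ker ≤ S) : normalizer (S.map f : Set G') = (normalizer (S : Set G)).map f := by
  rw [← map_comap_eq_self_of_surjective hf (normalizer _),
    comap_normalizer_eq_of_surjective _ hf, comap_map_eq_self hS]

theorem map_map_conj (H : Subgroup G) (f : G →* G') (x : G) :
    (H.map f).map (MulAut.conj (f x)).toMonoidHom = (H.map (MulAut.conj x).toMonoidHom).map f := by
  rw [map_map, map_map]
  congr 1
  ext
  simp

end Subgroup

namespace DoubleCoset

variable {G G' : Type*} [Group G] [Group G'] {f : G →* G'}

theorem rel_map {H K : Subgroup G} {a b : G} (hab : setoid (H : Set G) K a b) :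
    setoid (H.map f : Set G') (K.map f) (f a) (f b) := by
  obtain ⟨h, hh, k, hk, rfl⟩ := rel_iff.1 hab
  exact rel_iff.2 ⟨f h, ⟨h, hh, rfl⟩, f k, ⟨k, hk, rfl⟩, by simp⟩

theorem rel_of_rel_map {H K : Subgroup G} (hK : f.ker ≤ K) {a b : G}
    (hab : setoid (H.map f : Set G') (K.map f) (f a) (f b)) : setoid (H : Set G) K a b := by
  obtain ⟨_, ⟨h, hh, rfl⟩, _, ⟨k, hk, rfl⟩, heq⟩ := rel_iff.1 hab
  have hn : (h * a * k)⁻¹ * b ∈ K := hK (by rw [MonoidHom.mem_ker, map_mul, map_inv, heq, map_mul, map_mul]; group)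
  exact rel_iff.2 ⟨h, hh, k * ((h * a * k)⁻¹ * b), K.mul_mem hk hn, by group⟩

noncomputable def quotientEquivMapOfSurjective (hf : Function.Surjective f) (H : Subgroup G)
    {K : Subgroup G} (hK : f.ker ≤ K) :
    Quotient (H : Set G) K ≃ Quotient (H.map f : Set G') (K.map f) :=
  Equiv.ofBijective (Quotient.map' f fun _ _ => rel_map) <| by
    refine ⟨fun a b hab => ?_, fun q => ?_⟩
    · induction a using Quotient.inductionOn'
      induction b using Quotient.inductionOn'
      exact Quotient.sound' (rel_of_rel_map hK (Quotient.exact' hab))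
    · induction q using Quotient.inductionOn' with | h y =>
      obtain ⟨x, rfl⟩ := hf y
      exact ⟨mk H K x, rfl⟩

theorem quotientEquivMapOfSurjective_mk (hf : Function.Surjective f) (H : Subgroup G)
    {K : Subgroup G} (hK : f.ker ≤ K) (x : G) :
    quotientEquivMapOfSurjective hf H hK (mk H K x) = mk (H.map f) (K.map f) (f x) :=
  rfl

end DoubleCoset

theorem stmt13_general (P : Type*) [Group P]
    (H : Subgroup P)
    (N S : Subgroup P) [N.Normal] (hNS : N ≤ S) :
    (∃ f : DoubleCoset.Quotient (H : Set P) ((Subgroup.normalizer (S : Set P)) : Set P) ≃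
        DoubleCoset.Quotient ((H.map (QuotientGroup.mk' N) : Subgroup (P ⧸ N)) : Set (P ⧸ N))
          (((Subgroup.normalizer ((S.map (QuotientGroup.mk' N) : Subgroup (P ⧸ N)) : Set (P ⧸ N))) : Subgroup (P ⧸ N)) : Set (P ⧸ N)),
      ∀ x : P,
        f (DoubleCoset.mk H (Subgroup.normalizer (S : Set P)) x)
          = DoubleCoset.mk (H.map (QuotientGroup.mk' N)) (Subgroup.normalizer ((S.map (QuotientGroup.mk' N) : Subgroup (P ⧸ N)) : Set (P ⧸ N)))
              (QuotientGroup.mk' N x)) ∧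
    ∀ x : P,
      (H.map (MulAut.conj x⁻¹).toMonoidHom ⊓ (Subgroup.normalizer (S : Set P)) ≤ S ↔
        (H.map (QuotientGroup.mk' N)).map
            (MulAut.conj ((QuotientGroup.mk' N) x)⁻¹).toMonoidHom ⊓
            (Subgroup.normalizer ((S.map (QuotientGroup.mk' N) : Subgroup (P ⧸ N)) : Set (P ⧸ N)))
          ≤ S.map (QuotientGroup.mk' N)) := by
  have hsurj := QuotientGroup.mk'_surjective N
  have hker : (QuotientGroup.mk' N).ker ≤ S := (QuotientGroup.ker_mk' N).symm ▸ hNS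
  rw [Subgroup.normalizer_map_of_surjective hsurj hker]
  refine ⟨⟨_, DoubleCoset.quotientEquivMapOfSurjective_mk hsurj H (hker.trans Subgroup.le_normalizer)⟩,
    fun x => ?_⟩
  rw [← map_inv, Subgroup.map_map_conj]
  exact Subgroup.inf_le_iff_map_inf_map_le _ hker Subgroup.le_normalizer

/-- Let `P` be a finite `p`-group, `H` a cyclic subgroup, `g` an element centralizing `H`,
`N ⊴ P`, and `N ≤ S ≤ N_P(S)`. Then `HxN_P(S) ↦ H̃x̃N_{P̃}(S̃)` is a bijection of double-coset
spaces `H\P/N_P(S) → H̃\P̃/N_{P̃}(S̃)` (tildes denoting images mod `N`); moreover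
`H^x ∩ N_P(S) ≤ S` iff `H̃^x̃ ∩ N_{P̃}(S̃) ≤ S̃`. -/
theorem stmt13 (p : ℕ) (hp : p.Prime) (P : Type*) [Group P] [Finite P]
    (hP : IsPGroup p P)
    (H : Subgroup P) (hH : IsCyclic H) (g : P) (hg : g ∈ Subgroup.centralizer (H : Set P))
    (N S : Subgroup P) [N.Normal] (hNS : N ≤ S) (hSn : S ≤ (Subgroup.normalizer (S : Set P))) :
    (∃ f : DoubleCoset.Quotient (H : Set P) ((Subgroup.normalizer (S : Set P)) : Set P) ≃
        DoubleCoset.Quotient ((H.map (QuotientGroup.mk' N) : Subgroup (P ⧸ N)) : Set (P ⧸ N))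
          (((Subgroup.normalizer ((S.map (QuotientGroup.mk' N) : Subgroup (P ⧸ N)) : Set (P ⧸ N))) : Subgroup (P ⧸ N)) : Set (P ⧸ N)),
      ∀ x : P,
        f (DoubleCoset.mk H (Subgroup.normalizer (S : Set P)) x)
          = DoubleCoset.mk (H.map (QuotientGroup.mk' N)) (Subgroup.normalizer ((S.map (QuotientGroup.mk' N) : Subgroup (P ⧸ N)) : Set (P ⧸ N)))
              (QuotientGroup.mk' N x)) ∧
    ∀ x : P,
      (H.map (MulAut.conj x⁻¹).toMonoidHom ⊓ (Subgroup.normalizer (S : Set P)) ≤ S ↔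
        (H.map (QuotientGroup.mk' N)).map
            (MulAut.conj ((QuotientGroup.mk' N) x)⁻¹).toMonoidHom ⊓
            (Subgroup.normalizer ((S.map (QuotientGroup.mk' N) : Subgroup (P ⧸ N)) : Set (P ⧸ N)))
          ≤ S.map (QuotientGroup.mk' N)) :=
  stmt13_general P H N S hNS
end

section
/- Let p be an odd prime and P an (almost) extra-special p-group with center Z, and suppose Y₀, Y are subgroups of P intersecting Z trivially, with Y of maximal order among such subgroups. Then there exists x ∈ P such that Y₀ ∩ Y·Z ≤ Y^x; in particular, if Y₀ also has maximal order, then Y₀ and Y are 'linked', i.e., there exist x, y ∈ P with Y₀^x ∩ YZ ≤ Y and Y^y ∩ Y₀Z ≤ Y₀. -/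
/-!
Since `P' = Φ(P)` has order `p`, it is central, every `p`-th power lies in `Z`, and the elements
of `Z` of order dividing `p` lie in `P'`. Hence each `d ∈ Y₀ ∩ YZ` (which has `d ^ p = 1`)
factors as `d = y c` with `y ∈ Y`, `c ∈ P'`, and `d ↦ c⁻¹` is a homomorphism `δ` into `P'`.
In a group of class two with `|P'| = p`, every homomorphism `W → P'` from a subgroup `W` meeting
`Z` trivially is of the form `w ↦ ⁅x, w⁆`: pick `t` not centralising some `w₀ ∈ W`, handle
`W ∩ C(t)` by induction, and use that `w ↦ ⁅t, w⁆` maps `W` onto `P'` with kernel `W ∩ C(t)`.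
For the `x` realising `δ`, `x d x⁻¹ = δ(d) d ∈ Y`. The linkage follows by conjugating back,
as `YZ ⊇ P'` is normal.
-/

open Subgroup
open scoped Pointwise commutatorElement

theorem Subgroup.zpowers_eq_of_prime_card {G : Type*} [Group G] {H : Subgroup G}
    (hH : (Nat.card H).Prime) {g : G} (hg : g ∈ H) (hg1 : g ≠ 1) : zpowers g = H := by
  have : Finite H := Nat.finite_of_card_ne_zero hH.ne_zero
  refine eq_of_le_of_card_ge (zpowers_le.mpr hg) ?_
  rcases hH.eq_one_or_self_of_dvd _ (card_dvd_of_le (zpowers_le.mpr hg)) with h | h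
  · exact absurd (zpowers_eq_bot.mp (card_eq_one.mp h)) hg1
  · exact h.ge

theorem Subgroup.mem_of_pow_card_eq_one_of_isCyclic {G : Type*} [Group G] {H K : Subgroup G}
    [IsCyclic K] [Finite K] (hHK : H ≤ K) {z : G} (hz : z ∈ K) (hzH : z ^ Nat.card H = 1) :
    z ∈ H := by
  let _ : CommGroup K := IsCyclic.commGroup
  set n := Nat.card H
  have hn : Nat.card (H.subgroupOf K) = n := Nat.card_congr (subgroupOfEquivOfLe hHK).toEquiv
  have hle : H.subgroupOf K ≤ (powMonoidHom n : K →* K).ker := fun h hh => by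
    have := congrArg Subtype.val (pow_card_eq_one' (G := H.subgroupOf K) (x := ⟨h, hh⟩))
    rw [hn] at this
    exact this
  have heq : H.subgroupOf K = (powMonoidHom n : K →* K).ker := by
    refine eq_of_le_of_card_ge hle ?_
    rw [IsCyclic.card_powMonoidHom_ker, hn, Nat.gcd_eq_right (hn ▸ card_subgroup_dvd_card _)]
  have hz' : (⟨z, hz⟩ : K) ∈ (powMonoidHom n : K →* K).ker := Subtype.ext hzH
  exact mem_subgroupOf.mp (heq ▸ hz')

theorem MonoidHom.exists_zpow_of_ker_le {A G : Type*} [Group A] [Group G] {φ ψ : A →* G}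
    {a₀ : A} (hφ : ∀ a, φ a ∈ zpowers (φ a₀)) (hψ : ψ a₀ ∈ zpowers (φ a₀))
    (hker : φ.ker ≤ ψ.ker) : ∃ j : ℤ, ∀ a, ψ a = φ a ^ j := by
  obtain ⟨j, hj⟩ := mem_zpowers_iff.mp hψ
  refine ⟨j, fun a => ?_⟩
  obtain ⟨m, hm⟩ := mem_zpowers_iff.mp (hφ a)
  have hker' : a * a₀ ^ (-m) ∈ ψ.ker := hker <| by
    rw [mem_ker, map_mul, map_zpow, ← hm, zpow_neg, mul_inv_cancel]
  rw [mem_ker, map_mul, map_zpow, zpow_neg, mul_inv_eq_one] at hker'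
  rw [hker', ← hj, ← hm, ← zpow_mul, ← zpow_mul, mul_comm]

namespace IsPGroup

variable {p : ℕ} [Fact p.Prime] {G : Type*} [Group G] [Finite G]

theorem index_eq_of_isCoatom (hG : IsPGroup p G) {M : Subgroup G} (hM : IsCoatom M) :
    M.index = p := by
  have hp : 1 < p := (Fact.out : p.Prime).one_lt
  obtain ⟨n, hn⟩ := iff_card.mp hG
  obtain ⟨k, hk⟩ := iff_card.mp (hG.to_subgroup M)
  have hkn : k < n := by
    have := lt_of_le_of_ne M.card_le_card_group (mt (card_eq_iff_eq_top M).mp hM.1)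
    rwa [hn, hk, Nat.pow_lt_pow_iff_right hp] at this
  obtain ⟨K, hK, hMK⟩ := Sylow.exists_subgroup_card_pow_prime_le p
    (hn ▸ pow_dvd_pow p hkn : p ^ (k + 1) ∣ Nat.card G) M hk k.le_succ
  have hKtop : K = ⊤ := hM.2 K <| lt_of_le_of_ne hMK fun h => by
    rw [← h, hk, Nat.pow_right_inj hp] at hK
    omega
  have := M.card_mul_index
  rw [← card_top (G := G), ← hKtop, hK, hk, pow_succ] at this
  exact Nat.eq_of_mul_eq_mul_left (pow_pos (by omega) k) this

theorem pow_mem_frattini (hG : IsPGroup p G) (g : G) : g ^ p ∈ frattini G := by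
  have := hG.isNilpotent
  simp only [frattini, Order.radical, mem_iInf]
  intro M hM
  have := NormalizerCondition.normal_of_coatom M Group.normalizerCondition_of_isNilpotent hM
  simpa [hG.index_eq_of_isCoatom hM] using M.pow_index_mem g

theorem le_center_of_card_eq (hG : IsPGroup p G) (N : Subgroup G) [N.Normal]
    (hN : Nat.card N = p) : N ≤ center G := by
  have hfix : (1 : N) ∈ MulAction.fixedPoints (ConjAct G) N := fun g => by ext; simp
  obtain ⟨b, hb, hb1⟩ :=
    (hG.of_equiv ConjAct.toConjAct).exists_fixed_point_of_prime_dvd_card_of_fixed_point N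
      (hN ▸ dvd_rfl) hfix
  have hbZ : (b : G) ∈ center G := by
    rw [← SetLike.mem_coe, ← ConjAct.fixedPoints_eq_center]
    intro g
    simpa [ConjAct.Subgroup.val_conj_smul] using congrArg Subtype.val (hb g)
  rw [← zpowers_eq_of_prime_card (hN ▸ Fact.out) b.2 (by simpa [eq_comm] using hb1)]
  exact zpowers_le.mpr hbZ

end IsPGroup

section CentralCommutators

variable {G : Type*} [Group G]

theorem commutatorElement_mem_commutator (a b : G) : ⁅a, b⁆ ∈ commutator G :=
  commutator_mem_commutator (mem_top a) (mem_top b)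

theorem commutatorElement_mul_left_of_le_center (hG : commutator G ≤ center G) (a b c : G) :
    ⁅a * b, c⁆ = ⁅a, c⁆ * ⁅b, c⁆ := by
  have hbc := mem_center_iff.mp (hG (commutatorElement_mem_commutator b c))
  rw [commutatorElement_mul_left_eq_conj_mul, hbc a, mul_inv_cancel_right, hbc]

theorem commutatorElement_mul_right_of_le_center (hG : commutator G ≤ center G) (a b c : G) :
    ⁅a, b * c⁆ = ⁅a, b⁆ * ⁅a, c⁆ := by
  rw [commutatorElement_mul_right_eq_mul_conj, mul_assoc ⁅a, b⁆,
    mem_center_iff.mp (hG (commutatorElement_mem_commutator a c)) b, mul_assoc,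
    mul_inv_cancel_right]

theorem commutatorElement_zpow_left_of_le_center (hG : commutator G ≤ center G) (a b : G)
    (n : ℤ) : ⁅a ^ n, b⁆ = ⁅a, b⁆ ^ n :=
  map_zpow (MonoidHom.mk' (⁅·, b⁆) fun x y => commutatorElement_mul_left_of_le_center hG x y b) a n

theorem exists_commutatorElement_eq_of_eq_on_centralizer (hG : commutator G ≤ center G)
    (hp : (Nat.card (commutator G)).Prime) {W : Subgroup G} {t : G} {y₀ : W}
    (ht : ¬Commute t y₀) (f : W →* G) (hf : ∀ w, f w ∈ commutator G) {x' : G}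
    (hx' : ∀ w : W, (w : G) ∈ centralizer {t} → ⁅x', (w : G)⁆ = f w) :
    ∃ x : G, ∀ w : W, ⁅x, (w : G)⁆ = f w := by
  -- `ψ` vanishes on `ker φ = W ⊓ centralizer {t}`, and `φ` maps onto the cyclic group
  -- `commutator G`, so `ψ` is a power of `φ`.
  let φ : W →* G := MonoidHom.mk' (fun w => ⁅t, (w : G)⁆) fun u v =>
    commutatorElement_mul_right_of_le_center hG _ _ _
  let ψ : W →* G := MonoidHom.mk' (fun w => f w * ⁅x', (w : G)⁆⁻¹) fun u v => by
    have hu := mem_center_iff.mp (hG (inv_mem (commutatorElement_mem_commutator x' u)))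
    simp only [map_mul, coe_mul, commutatorElement_mul_right_of_le_center hG, mul_inv_rev,
      mul_assoc]
    rw [← hu (f v * _), mul_assoc]
  have hφ : zpowers (φ y₀) = commutator G :=
    zpowers_eq_of_prime_card hp (commutatorElement_mem_commutator t y₀)
      (mt commutatorElement_eq_one_iff_commute.mp ht)
  have hker : φ.ker ≤ ψ.ker := fun w hw => by
    show f w * ⁅x', (w : G)⁆⁻¹ = 1
    rw [hx' w (mem_centralizer_singleton_iff.mpr
      (commutatorElement_eq_one_iff_mul_comm.mp hw).symm), mul_inv_cancel]
  obtain ⟨j, hj⟩ := MonoidHom.exists_zpow_of_ker_le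
    (fun w => hφ ▸ commutatorElement_mem_commutator t w)
    (hφ ▸ mul_mem (hf y₀) (inv_mem (commutatorElement_mem_commutator x' y₀))) hker
  refine ⟨t ^ j * x', fun w => ?_⟩
  have hψ : f w * ⁅x', (w : G)⁆⁻¹ = ⁅t, (w : G)⁆ ^ j := hj w
  rw [commutatorElement_mul_left_of_le_center hG, commutatorElement_zpow_left_of_le_center hG,
    ← hψ, inv_mul_cancel_right]

theorem exists_commutatorElement_eq [Finite G] (hG : commutator G ≤ center G)
    (hp : (Nat.card (commutator G)).Prime) (W : Subgroup G) (hW : W ⊓ center G = ⊥)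
    (f : W →* G) (hf : ∀ w, f w ∈ commutator G) : ∃ x : G, ∀ w : W, ⁅x, (w : G)⁆ = f w := by
  induction W using WellFoundedLT.induction with
  | ind W ih => ?_
  rcases eq_or_ne W ⊥ with rfl | hW₀
  · exact ⟨1, fun w => by simp [Subsingleton.elim w 1]⟩
  obtain ⟨y₀, hy₀⟩ := ne_bot_iff_exists_ne_one.mp hW₀
  obtain ⟨t, ht⟩ : ∃ t : G, ¬Commute t y₀ := by
    by_contra! h
    have : (y₀ : G) ∈ W ⊓ center G := ⟨y₀.2, mem_center_iff.mpr fun g => (h g).eq⟩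
    exact hy₀ (Subtype.ext (by simpa [hW] using this))
  set K := W ⊓ centralizer {t}
  have hy₀K : (y₀ : G) ∉ K := fun h => ht (mem_centralizer_singleton_iff.mp h.2).symm
  have hKW : K < W := lt_of_le_of_ne inf_le_left fun h => hy₀K (by rw [h]; exact y₀.2)
  obtain ⟨x', hx'⟩ := ih K hKW (le_bot_iff.mp (hW ▸ inf_le_inf_right _ hKW.le))
    (f.comp (inclusion hKW.le)) fun _ => hf _
  exact exists_commutatorElement_eq_of_eq_on_centralizer hG hp ht f hf
    fun w hw => hx' ⟨w, w.2, hw⟩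

theorem exists_monoidHom_mul_mem_of_le_sup {N Y D : Subgroup G} (hN : N ≤ center G)
    (hY : Y ⊓ N = ⊥) (hD : D ≤ Y ⊔ N) : ∃ f : D →* G, ∀ d : D, f d ∈ N ∧ f d * d ∈ Y := by
  have : N.Normal := ⟨fun n hn g => by rwa [mem_center_iff.mp (hN hn) g, mul_inv_cancel_right]⟩
  have hex : ∀ d : D, ∃ c ∈ N, c * d ∈ Y := fun d => by
    obtain ⟨y, hy, z, hz, hyz⟩ := mem_sup_of_normal_right.mp (hD d.2)
    refine ⟨z⁻¹, inv_mem hz, ?_⟩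
    rwa [← hyz, mem_center_iff.mp (hN hz) y, inv_mul_cancel_left]
  have huniq : ∀ {d c c' : G}, c ∈ N → c' ∈ N → c * d ∈ Y → c' * d ∈ Y → c = c' := by
    intro d c c' hc hc' h h'
    have : (c * d) * (c' * d)⁻¹ ∈ Y ⊓ N := mem_inf.mpr
      ⟨mul_mem h (inv_mem h'), by simpa [mul_assoc] using mul_mem hc (inv_mem hc')⟩
    rwa [hY, mem_bot, mul_inv_eq_one, mul_left_inj] at this
  choose c hcN hcY using hex
  refine ⟨MonoidHom.mk' c fun d₁ d₂ => huniq (hcN _) (mul_mem (hcN d₁) (hcN d₂)) (hcY _) ?_,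
    fun d => ⟨hcN d, hcY d⟩⟩
  convert mul_mem (hcY d₁) (hcY d₂) using 1
  rw [coe_mul, mul_assoc, mul_assoc, ← mul_assoc (d₁ : G),
    mem_center_iff.mp (hN (hcN d₂)) (d₁ : G), mul_assoc]

theorem exists_le_conj_smul_of_le_sup_commutator [Finite G] (hG : commutator G ≤ center G)
    (hp : (Nat.card (commutator G)).Prime) {Y D : Subgroup G} (hY : Y ⊓ commutator G = ⊥)
    (hD : D ⊓ center G = ⊥) (hDY : D ≤ Y ⊔ commutator G) : ∃ x : G, D ≤ MulAut.conj x • Y := by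
  obtain ⟨f, hf⟩ := exists_monoidHom_mul_mem_of_le_sup hG hY hDY
  obtain ⟨x, hx⟩ := exists_commutatorElement_eq hG hp D hD f fun d => (hf d).1
  refine ⟨x⁻¹, fun d hd => ?_⟩
  rw [mem_pointwise_smul_iff_inv_smul_mem, ← map_inv, MulAut.smul_def, MulAut.conj_apply,
    inv_inv]
  simpa [← hx ⟨d, hd⟩, commutatorElement_def] using (hf ⟨d, hd⟩).2

theorem Subgroup.conj_inv_smul_inf_le {A B N : Subgroup G} [N.Normal]
    {x : G} (h : A ⊓ N ≤ MulAut.conj x • B) : MulAut.conj x⁻¹ • A ⊓ N ≤ B := by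
  rwa [subset_pointwise_smul_iff, smul_inf, ← map_inv, Normal.conj_smul_eq_self x⁻¹ N] at h

theorem inf_sup_center_le_sup_of_pow_mem_center {p : ℕ}
    {N Y₀ Y : Subgroup G} (hpow : ∀ g : G, g ^ p ∈ center G)
    (hN : ∀ z ∈ center G, z ^ p = 1 → z ∈ N) (hY₀ : Y₀ ⊓ center G = ⊥)
    (hY : Y ⊓ center G = ⊥) : Y₀ ⊓ (Y ⊔ center G) ≤ Y ⊔ N := by
  have pow_eq_one : ∀ {H : Subgroup G}, H ⊓ center G = ⊥ → ∀ g ∈ H, g ^ p = 1 :=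
    fun hH g hg => by simpa [hH] using mem_inf.mpr ⟨pow_mem hg p, hpow g⟩
  rintro d ⟨hd₀, hd⟩
  obtain ⟨y, hy, z, hz, rfl⟩ := mem_sup_of_normal_right.mp hd
  have hzp : z ^ p = 1 := by
    have := pow_eq_one hY₀ _ hd₀
    have hyz : Commute y z := mem_center_iff.mp hz y
    rwa [hyz.mul_pow, pow_eq_one hY y hy, one_mul] at this
  exact mul_mem_sup hy (hN z hz hzp)

end CentralCommutators

theorem stmt19_general (p : ℕ) (hp : p.Prime) (P : Type*) [Group P] [Finite P]
    (hP : IsPGroup p P)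
    (hcf : commutator P = frattini P) (hcard : Nat.card (commutator P) = p)
    (hZ : Subgroup.center P = commutator P ∨
      (IsCyclic (Subgroup.center P) ∧ Nat.card (Subgroup.center P) = p ^ 2))
    (Y₀ Y : Subgroup P)
    (hY₀ : Y₀ ⊓ Subgroup.center P = ⊥) (hY : Y ⊓ Subgroup.center P = ⊥) :
    (∃ x : P, Y₀ ⊓ (Y ⊔ Subgroup.center P) ≤ Y.map (MulAut.conj x).toMonoidHom) ∧
    ((∀ Y' : Subgroup P, Y' ⊓ Subgroup.center P = ⊥ → Nat.card Y' ≤ Nat.card Y₀) →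
      ∃ x y : P,
        (Y₀.map (MulAut.conj x).toMonoidHom) ⊓ (Y ⊔ Subgroup.center P) ≤ Y ∧
        (Y.map (MulAut.conj y).toMonoidHom) ⊓ (Y₀ ⊔ Subgroup.center P) ≤ Y₀) := by
  have : Fact p.Prime := ⟨hp⟩
  have hPZ : commutator P ≤ center P := hP.le_center_of_card_eq _ hcard
  have hpow : ∀ g : P, g ^ p ∈ center P := fun g => hPZ (hcf ▸ hP.pow_mem_frattini g)
  have hΩ : ∀ z ∈ center P, z ^ p = 1 → z ∈ commutator P := by
    rcases hZ with hZ | ⟨_, _⟩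
    · exact fun z hz _ => hZ ▸ hz
    · exact fun z hz hzp => mem_of_pow_card_eq_one_of_isCyclic hPZ hz (hcard ▸ hzp)
  have key : ∀ {A B : Subgroup P}, A ⊓ center P = ⊥ → B ⊓ center P = ⊥ →
      ∃ x : P, A ⊓ (B ⊔ center P) ≤ MulAut.conj x • B := fun {A B} hA hB =>
    exists_le_conj_smul_of_le_sup_commutator hPZ (hcard ▸ hp)
      (le_bot_iff.mp (hB ▸ inf_le_inf_left B hPZ))
      (le_bot_iff.mp (hA ▸ inf_le_inf_right _ inf_le_left))
      (inf_sup_center_le_sup_of_pow_mem_center hpow hΩ hA hB)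
  refine ⟨key hY₀ hY, fun _ => ?_⟩
  obtain ⟨x, hx⟩ := key hY₀ hY
  obtain ⟨y, hy⟩ := key hY hY₀
  have : (Y ⊔ center P).Normal := .of_commutator_le _ (hPZ.trans le_sup_right)
  have : (Y₀ ⊔ center P).Normal := .of_commutator_le _ (hPZ.trans le_sup_right)
  exact ⟨x⁻¹, y⁻¹, conj_inv_smul_inf_le hx, conj_inv_smul_inf_le hy⟩

/-- Let `P` be an (almost) extra-special `p`-group with center `Z`, and `Y₀, Y` subgroups
intersecting `Z` trivially, with `Y` of maximal order among such. Then there is `x ∈ P` with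
`Y₀ ∩ YZ ≤ Y^x`; in particular if `Y₀` is also of maximal order then `Y₀` and `Y` are
linked: there are `x, y ∈ P` with `Y₀^x ∩ YZ ≤ Y` and `Y^y ∩ Y₀Z ≤ Y₀`. -/
theorem stmt19 (p : ℕ) (hp : p.Prime) (P : Type*) [Group P] [Finite P]
    (hP : IsPGroup p P)
    (hcf : commutator P = frattini P) (hcard : Nat.card (commutator P) = p)
    (hZ : Subgroup.center P = commutator P ∨
      (IsCyclic (Subgroup.center P) ∧ Nat.card (Subgroup.center P) = p ^ 2))
    (Y₀ Y : Subgroup P)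
    (hY₀ : Y₀ ⊓ Subgroup.center P = ⊥) (hY : Y ⊓ Subgroup.center P = ⊥)
    (hmax : ∀ Y' : Subgroup P, Y' ⊓ Subgroup.center P = ⊥ → Nat.card Y' ≤ Nat.card Y) :
    (∃ x : P, Y₀ ⊓ (Y ⊔ Subgroup.center P) ≤ Y.map (MulAut.conj x).toMonoidHom) ∧
    ((∀ Y' : Subgroup P, Y' ⊓ Subgroup.center P = ⊥ → Nat.card Y' ≤ Nat.card Y₀) →
      ∃ x y : P,
        (Y₀.map (MulAut.conj x).toMonoidHom) ⊓ (Y ⊔ Subgroup.center P) ≤ Y ∧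
        (Y.map (MulAut.conj y).toMonoidHom) ⊓ (Y₀ ⊔ Subgroup.center P) ≤ Y₀) :=
  stmt19_general p hp P hP hcf hcard hZ Y₀ Y hY₀ hY
end
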